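/- Let v > 0 and ω be real numbers and let (a, κ, q) be a nonconstant maximal solution of system (S) on an open interval (ξ_min, ξ_max) with a(ξ) > 0 for all ξ. Assume that a is strictly increasing on (ξ_min, ξ_max) and that a(ξ) does not tend to +∞ as ξ → ξ_max. Then: (1) ξ_max = +∞; (2) ω > 0; (3) a(ξ) → √ω as ξ → +∞. -/

import Mathlib

open Filter Asymptotics MeasureTheory

noncomputable section

/-- The open interval of real numbers between the extended reals `ξmin` and `ξmax`. -/
def domS (ξmin ξmax : EReal) : Set ℝ := {ξ : ℝ | ξmin < (ξ : EReal) ∧ (ξ : EReal) < ξmax}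

/-- `(a, κ, q)` is a solution of system (S) with parameters `v`, `ω` on the set `s`. -/
def IsSolS (v ω : ℝ) (a κ q : ℝ → ℝ) (s : Set ℝ) : Prop :=
  ∀ ξ ∈ s,
    HasDerivAt a (κ ξ * a ξ) ξ ∧
    HasDerivAt κ (-v * κ ξ - (κ ξ) ^ 2 + (q ξ) ^ 2) ξ ∧
    HasDerivAt q (ω - (a ξ) ^ 2 - v * q ξ - 2 * q ξ * κ ξ) ξ

/-- `(a, κ, q)` is a maximal solution of system (S) on the open interval `(ξmin, ξmax)`:
it cannot be extended to a solution on a strictly larger open interval. -/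
def IsMaximalSolS (v ω : ℝ) (a κ q : ℝ → ℝ) (ξmin ξmax : EReal) : Prop :=
  ξmin < ξmax ∧
  IsSolS v ω a κ q (domS ξmin ξmax) ∧
  ∀ ξmin' ξmax' : EReal, ∀ a' κ' q' : ℝ → ℝ,
    ξmin' ≤ ξmin → ξmax ≤ ξmax' →
    IsSolS v ω a' κ' q' (domS ξmin' ξmax') →
    (∀ ξ ∈ domS ξmin ξmax, a' ξ = a ξ ∧ κ' ξ = κ ξ ∧ q' ξ = q ξ) →
    ξmin' = ξmin ∧ ξmax' = ξmax

/-- The filter of real numbers tending to the extended real `c` from the left. -/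
def leftLimF (c : EReal) : Filter ℝ :=
  Filter.comap (fun x : ℝ => (x : EReal)) (nhdsWithin c (Set.Iio c))

/-- The filter of real numbers tending to the extended real `c` from the right. -/
def rightLimF (c : EReal) : Filter ℝ :=
  Filter.comap (fun x : ℝ => (x : EReal)) (nhdsWithin c (Set.Ioi c))

/-- `B` (with derivative `B'`) is a solution of the second order ODE (E) on the set `s`. -/
def IsSolE (v ω : ℝ) (B B' : ℝ → ℂ) (s : Set ℝ) : Prop :=
  ∀ ξ ∈ s,
    HasDerivAt B (B' ξ) ξ ∧
    HasDerivAt B'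
      (-(v : ℂ) * B' ξ + Complex.I * (ω : ℂ) * B ξ
        - Complex.I * (((‖B ξ‖ : ℝ) : ℂ)) ^ 2 * B ξ) ξ

/-- `B` (with derivative `B'`) is a maximal solution of (E) on the open interval
`(ξmin, ξmax)`. -/
def IsMaximalSolE (v ω : ℝ) (B B' : ℝ → ℂ) (ξmin ξmax : EReal) : Prop :=
  ξmin < ξmax ∧
  IsSolE v ω B B' (domS ξmin ξmax) ∧
  ∀ ξmin' ξmax' : EReal, ∀ C C' : ℝ → ℂ,
    ξmin' ≤ ξmin → ξmax ≤ ξmax' →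
    IsSolE v ω C C' (domS ξmin' ξmax') →
    (∀ ξ ∈ domS ξmin ξmax, C ξ = B ξ ∧ C' ξ = B' ξ) →
    ξmin' = ξmin ∧ ξmax' = ξmax

/-- `α(v)`: the real part of the square root of `v² + 4i` with positive real part. -/
def alphaS (v : ℝ) : ℝ := Real.sqrt ((v ^ 2 + Real.sqrt (v ^ 4 + 16)) / 2)

/-- `β(v)`: the imaginary part of the square root of `v² + 4i` with positive real part. -/
def betaS (v : ℝ) : ℝ := 2 / alphaS v

/-- `z₊(v) = (-v + α + iβ)/2`, the root of `z² + vz - i = 0` with positive real part. -/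
def zplus (v : ℝ) : ℂ := (-(v : ℂ) + (alphaS v : ℂ) + (betaS v : ℂ) * Complex.I) / 2

/-- `z₋(v) = (-v - α - iβ)/2`, the root of `z² + vz - i = 0` with negative real part. -/
def zminus (v : ℝ) : ℂ := (-(v : ℂ) - (alphaS v : ℂ) - (betaS v : ℂ) * Complex.I) / 2

section AuxProof
open Filter Set


/-- Invariance lemma: if `f x₀ ≤ b` and `f' < 0` whenever `f ≥ b`, then `f x₂ ≤ b`. -/
lemma aux_inv {f f' : ℝ → ℝ} {x₀ x₂ b : ℝ} (hx : x₀ ≤ x₂)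
    (hd : ∀ ξ ∈ Icc x₀ x₂, HasDerivAt f (f' ξ) ξ)
    (hb : ∀ ξ ∈ Icc x₀ x₂, b ≤ f ξ → f' ξ < 0)
    (h0 : f x₀ ≤ b) : f x₂ ≤ b := by
  by_contra hc
  push_neg at hc
  have hcont : ContinuousOn f (Icc x₀ x₂) :=
    fun ξ hξ => (hd ξ hξ).continuousAt.continuousWithinAt
  set S : Set ℝ := {ξ | ξ ∈ Icc x₀ x₂ ∧ f ξ ≤ b} with hS
  have hSne : S.Nonempty := ⟨x₀, ⟨le_refl _, hx⟩, h0⟩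
  have hSbdd : BddAbove S := ⟨x₂, fun ξ hξ => hξ.1.2⟩
  have hSclosed : IsClosed S := by
    have h1 : S = Icc x₀ x₂ ∩ f ⁻¹' (Iic b) := by
      ext ξ; simp only [hS, mem_setOf_eq, mem_inter_iff, mem_preimage, mem_Iic]
    rw [h1]
    exact hcont.preimage_isClosed_of_isClosed isClosed_Icc isClosed_Iic
  set s := sSup S with hs
  have hsmem : s ∈ S := hSclosed.csSup_mem hSne hSbdd
  have hsne : s ≠ x₂ := by
    intro h
    rw [h] at hsmem
    exact absurd hsmem.2 (not_le.2 hc)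
  have hsx2 : s < x₂ := lt_of_le_of_ne hsmem.1.2 hsne
  -- on (s, x₂], f > b
  have hgt : ∀ ξ, s < ξ → ξ ≤ x₂ → b < f ξ := by
    intro ξ h1 h2
    by_contra h3
    push_neg at h3
    exact absurd (le_csSup hSbdd (⟨⟨hsmem.1.1.trans h1.le, h2⟩, h3⟩ : ξ ∈ S)) (not_le.2 h1)
  -- f is strictly decreasing on [s, x₂]
  have hanti : StrictAntiOn f (Icc s x₂) := by
    apply strictAntiOn_of_deriv_neg (convex_Icc _ _)
      (hcont.mono (Icc_subset_Icc hsmem.1.1 le_rfl))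
    intro ξ hξ
    rw [interior_Icc] at hξ
    have hξ' : ξ ∈ Icc x₀ x₂ := ⟨hsmem.1.1.trans hξ.1.le, hξ.2.le⟩
    rw [(hd ξ hξ').deriv]
    exact hb ξ hξ' (hgt ξ hξ.1 hξ.2.le).le
  have := hanti (left_mem_Icc.2 hsx2.le) (right_mem_Icc.2 hsx2.le) hsx2
  exact absurd (hc.trans this) (not_lt.2 hsmem.2)

/-- Drift lemma: derivative bounded above by `-δ` forces linear decay. -/
lemma aux_drift {f f' : ℝ → ℝ} {N δ : ℝ}
    (hd : ∀ ξ ≥ N, HasDerivAt f (f' ξ) ξ)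
    (hd' : ∀ ξ ≥ N, f' ξ ≤ -δ) :
    ∀ ξ ≥ N, f ξ ≤ f N - δ * (ξ - N) := by
  intro ξ hξ
  set g : ℝ → ℝ := fun x => f x + δ * x with hg
  have hganti : AntitoneOn g (Ici N) := by
    apply antitoneOn_of_deriv_nonpos (convex_Ici N)
    · exact fun x hx => ((hd x hx).continuousAt.continuousWithinAt.add
        ((continuous_const.mul continuous_id).continuousWithinAt))
    · intro x hx
      rw [interior_Ici] at hx
      exact ((hd x hx.le).add ((hasDerivAt_id x).const_mul δ)).differentiableAt.differentiableWithinAt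
    · intro x hx
      rw [interior_Ici] at hx
      have hder : HasDerivAt g (f' x + δ * 1) x :=
        (hd x hx.le).add ((hasDerivAt_id x).const_mul δ)
      rw [hder.deriv]
      have := hd' x hx.le
      linarith
  have := hganti (self_mem_Ici) (mem_Ici.2 hξ) hξ
  simp only [hg] at this
  linarith

/-- Barrier lemma: if `f' ≤ -δ < 0` whenever `f ≥ b`, then eventually `f ≤ b`. -/
lemma aux_barrier {f f' : ℝ → ℝ} {N b δ : ℝ} (hδ : 0 < δ)
    (hd : ∀ ξ ≥ N, HasDerivAt f (f' ξ) ξ)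
    (hbar : ∀ ξ ≥ N, b ≤ f ξ → f' ξ ≤ -δ) :
    ∃ ξ₁ ≥ N, ∀ ξ ≥ ξ₁, f ξ ≤ b := by
  -- first find one point below b
  have h1 : ∃ ξ₁ ≥ N, f ξ₁ ≤ b := by
    by_contra hcon
    push_neg at hcon
    have hall : ∀ ξ ≥ N, f' ξ ≤ -δ := fun ξ hξ => hbar ξ hξ (hcon ξ hξ).le
    have := aux_drift hd hall
    set ξ₂ := N + (f N - b) / δ + 1 with hξ₂
    have hξ₂N : ξ₂ ≥ N := by
      have h2 : 0 < f N - b := by linarith [hcon N le_rfl]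
      have := div_nonneg h2.le hδ.le
      simp only [hξ₂]; linarith
    have h3 := this ξ₂ hξ₂N
    have h4 : δ * (ξ₂ - N) = (f N - b) + δ := by
      rw [hξ₂, show N + (f N - b) / δ + 1 - N = (f N - b)/δ + 1 by ring, mul_add, mul_div_cancel₀ _ hδ.ne', mul_one]
    have := hcon ξ₂ hξ₂N
    rw [h4] at h3
    linarith
  obtain ⟨ξ₁, hξ₁, hfξ₁⟩ := h1
  refine ⟨ξ₁, hξ₁, fun ξ hξ => ?_⟩
  apply aux_inv hξ (fun x hx => hd x (hξ₁.trans hx.1)) _ hfξ₁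
  intro x hx hbx
  exact lt_of_le_of_lt (hbar x (hξ₁.trans hx.1) hbx) (by linarith)

/-- nonnegativity of the derivative of a strictly increasing function -/
lemma aux_deriv_nonneg {a : ℝ → ℝ} {d ξ : ℝ} {D : Set ℝ} (hD : D ∈ nhds ξ)
    (hd : HasDerivAt a d ξ)
    (hmono : ∀ x ∈ D, ∀ y ∈ D, x < y → a x < a y) (hξ : ξ ∈ D) : 0 ≤ d := by
  have hslope : Tendsto (slope a ξ) (nhdsWithin ξ (Ioi ξ)) (nhds d) :=
    (hasDerivAt_iff_tendsto_slope.1 hd).mono_left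
      (nhdsWithin_mono ξ (fun x hx => ne_of_gt hx))
  refine ge_of_tendsto hslope ?_
  have hev : ∀ᶠ x in nhdsWithin ξ (Ioi ξ), x ∈ D ∧ ξ < x :=
    (eventually_nhdsWithin_of_eventually_nhds (eventually_of_mem hD (fun x hx => hx))).and
      (eventually_mem_nhdsWithin.mono (fun x hx => hx))
  refine hev.mono (fun x hx => ?_)
  rw [slope_def_field]
  have h1 : a ξ < a x := hmono ξ hξ x hx.1 hx.2
  have h2 : 0 < x - ξ := by linarith [hx.2]
  exact div_nonneg (by linarith) h2.le

/-- The energy bound: `w = (aκ)² + (aq)²` stays below a fixed barrier. -/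
lemma aux_w_bound {v ω C : ℝ} {a κ q : ℝ → ℝ} {x₀ x₂ : ℝ} (hv : 0 < v) (hx : x₀ ≤ x₂)
    (hder : ∀ ξ ∈ Icc x₀ x₂, HasDerivAt a (κ ξ * a ξ) ξ ∧
      HasDerivAt κ (-v * κ ξ - (κ ξ) ^ 2 + (q ξ) ^ 2) ξ ∧
      HasDerivAt q (ω - (a ξ) ^ 2 - v * q ξ - 2 * q ξ * κ ξ) ξ)
    (hC : ∀ ξ ∈ Icc x₀ x₂, (a ξ * (ω - (a ξ)^2))^2 ≤ C^2) :
    (a x₂ * κ x₂)^2 + (a x₂ * q x₂)^2 ≤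
      max ((a x₀ * κ x₀)^2 + (a x₀ * q x₀)^2) ((C^2/v + 1)/v) := by
  set w : ℝ → ℝ := fun ξ => (a ξ * κ ξ)^2 + (a ξ * q ξ)^2 with hw
  set W' : ℝ → ℝ := fun ξ => -2*v*(w ξ) + 2*(a ξ*(ω - (a ξ)^2))*(a ξ * q ξ) with hW'
  have hdw : ∀ ξ ∈ Icc x₀ x₂, HasDerivAt w (W' ξ) ξ := by
    intro ξ hξ
    obtain ⟨h1, h2, h3⟩ := hder ξ hξ
    have hX := (h1.mul h2).pow 2
    have hY := (h1.mul h3).pow 2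
    refine (hX.add hY).congr_deriv ?_
    simp only [hW', hw, Pi.mul_apply, Nat.cast_ofNat]
    ring
  apply aux_inv hx hdw _ (le_max_left _ _)
  intro ξ hξ hb
  have hCξ := hC ξ hξ
  have hwb : (C^2/v + 1)/v ≤ w ξ := le_trans (le_max_right _ _) hb
  have hvw : C^2 + v ≤ v^2 * (w ξ) := by
    have h1 : C^2/v + 1 ≤ v * w ξ := by
      rw [div_le_iff₀ hv] at hwb; linarith [hwb]
    have h2 : C^2 + v ≤ v * (v * w ξ) := by
      have := mul_le_mul_of_nonneg_left h1 hv.le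
      calc C^2 + v = v * (C^2/v + 1) := by field_simp
        _ ≤ v * (v * w ξ) := this
    linarith [h2]
  have hYw : (a ξ * q ξ)^2 ≤ w ξ := by
    simp only [hw]; nlinarith [sq_nonneg (a ξ * κ ξ)]
  have key : v * (2*(a ξ*(ω - (a ξ)^2))*(a ξ*q ξ)) ≤ v^2*(a ξ*q ξ)^2 + C^2 := by
    nlinarith [sq_nonneg (v*(a ξ * q ξ) - a ξ*(ω - (a ξ)^2))]
  have key2 : v^2*(a ξ*q ξ)^2 ≤ v^2 * w ξ := by
    apply mul_le_mul_of_nonneg_left hYw (by positivity)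
  simp only [hW']
  nlinarith [key, key2, hvw, hv]

lemma aux_ereal_cases (x : EReal) (h1 : x ≠ ⊥) (h2 : x ≠ ⊤) : ∃ r : ℝ, x = (r : EReal) := by
  induction x using EReal.rec with
  | bot => exact absurd rfl h1
  | coe r => exact ⟨r, rfl⟩
  | top => exact absurd rfl h2

set_option maxHeartbeats 4000000 in
theorem aux_main (v ω : ℝ) (a κ q : ℝ → ℝ) (ξmin ξmax : EReal) (hv : 0 < v) (hlt : ξmin < ξmax) (hsol : IsSolS v ω a κ q (domS ξmin ξmax))
    (hpos : ∀ ξ ∈ domS ξmin ξmax, 0 < a ξ)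
    (hmono : ∀ ξ ∈ domS ξmin ξmax, ∀ ξ' ∈ domS ξmin ξmax, ξ < ξ' → a ξ < a ξ')
    (hnotinf : ¬ Tendsto a (leftLimF ξmax) atTop)
    (hmaxl : ∀ ξmin' ξmax' : EReal, ∀ a' κ' q' : ℝ → ℝ,
      ξmin' ≤ ξmin → ξmax ≤ ξmax' →
      IsSolS v ω a' κ' q' (domS ξmin' ξmax') →
      (∀ ξ ∈ domS ξmin ξmax, a' ξ = a ξ ∧ κ' ξ = κ ξ ∧ q' ξ = q ξ) →
      ξmin' = ξmin ∧ ξmax' = ξmax) :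
    ξmax = ⊤ ∧ 0 < ω ∧ Tendsto a atTop (nhds (Real.sqrt ω)) := by
  set D := domS ξmin ξmax with hD
  have hDopen : IsOpen D := by
    have h : D = (fun ξ : ℝ => (ξ : EReal)) ⁻¹' (Set.Ioo ξmin ξmax) := rfl
    rw [h]; exact isOpen_Ioo.preimage continuous_coe_real_ereal
  obtain ⟨ξ₀, hξ₀l, hξ₀r⟩ := EReal.exists_between_coe_real hlt
  have hξ₀D : ξ₀ ∈ D := ⟨hξ₀l, hξ₀r⟩
  -- boundedness of a
  have hMex : ∃ M, ∀ ξ ∈ D, a ξ ≤ M := by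
    by_contra hM
    push_neg at hM
    apply hnotinf
    rw [tendsto_atTop]
    intro M
    obtain ⟨ξ₁, hξ₁D, hξ₁⟩ := hM M
    rw [Filter.eventually_iff, leftLimF, Filter.mem_comap]
    refine ⟨Ioi (ξ₁ : EReal) ∩ Iio ξmax, inter_mem
      (nhdsWithin_le_nhds (isOpen_Ioi.mem_nhds hξ₁D.2)) self_mem_nhdsWithin, ?_⟩
    intro ξ hξ
    have h1 : ξ₁ < ξ := EReal.coe_lt_coe_iff.1 hξ.1
    have h2 : ξ ∈ D := ⟨hξ₁D.1.trans hξ.1, hξ.2⟩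
    exact (hξ₁.trans (hmono ξ₁ hξ₁D ξ h2 h1)).le
  obtain ⟨M, hM⟩ := hMex
  -- κ is nonnegative on D
  have hκ0 : ∀ ξ ∈ D, 0 ≤ κ ξ := by
    intro ξ hξ
    have h0 : 0 ≤ κ ξ * a ξ :=
      aux_deriv_nonneg (hDopen.mem_nhds hξ) (hsol ξ hξ).1 hmono hξ
    nlinarith [hpos ξ hξ]
  -- Icc ξ₀ ξ₂ ⊆ D for ξ₂ ∈ D
  have hsub : ∀ ξ₂ ∈ D, ∀ x ∈ Icc ξ₀ x, True := fun _ _ _ _ => trivial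
  have hIccD : ∀ ξ₂ ∈ D, ∀ x ∈ Icc ξ₀ ξ₂, x ∈ D := by
    intro ξ₂ hξ₂ x hx
    exact ⟨lt_of_lt_of_le hξ₀l (EReal.coe_le_coe_iff.2 hx.1),
      lt_of_le_of_lt (EReal.coe_le_coe_iff.2 hx.2) hξ₂.2⟩
  -- monotonicity: a ξ₀ ≤ a ξ for ξ ≥ ξ₀ in D
  have hmono' : ∀ ξ ∈ D, ξ₀ ≤ ξ → a ξ₀ ≤ a ξ := by
    intro ξ hξ h
    rcases eq_or_lt_of_le h with h' | h'
    · rw [h']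
    · exact (hmono ξ₀ hξ₀D ξ hξ h').le
  -- the pointwise bound on a(ω - a²)
  obtain ⟨C, hCb⟩ : ∃ C, ∀ ξ ∈ D, (a ξ * (ω - (a ξ)^2))^2 ≤ C^2 := by
    refine ⟨M * (|ω| + M^2), ?_⟩
    intro ξ hξ
    have h1 : 0 < a ξ := hpos ξ hξ
    have h2 : a ξ ≤ M := hM ξ hξ
    have h3 : ω ≤ |ω| := le_abs_self ω
    have h4 : -|ω| ≤ ω := neg_abs_le ω
    have h6 : (a ξ)^2 ≤ M^2 := by nlinarith [pow_le_pow_left₀ h1.le h2 2]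
    have hBu1 : 0 ≤ |ω| + M^2 - (ω - (a ξ)^2) := by linarith [sq_nonneg (a ξ)]
    have hBu2 : 0 ≤ |ω| + M^2 + (ω - (a ξ)^2) := by linarith
    have h5 : (ω - (a ξ)^2)^2 ≤ (|ω| + M^2)^2 := by nlinarith [mul_nonneg hBu1 hBu2]
    calc (a ξ * (ω - (a ξ)^2))^2 = (a ξ)^2 * (ω - (a ξ)^2)^2 := by ring
      _ ≤ M^2 * (|ω| + M^2)^2 := by
          apply mul_le_mul h6 h5 (sq_nonneg _) (sq_nonneg _)
      _ = (M * (|ω| + M^2))^2 := by ring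
  -- the energy bound
  set b : ℝ := max ((a ξ₀ * κ ξ₀)^2 + (a ξ₀ * q ξ₀)^2) ((C^2/v + 1)/v) with hbdef
  have hbpos : 0 < b := lt_of_lt_of_le (by positivity) (le_max_right _ _)
  have hwbd : ∀ ξ ∈ D, ξ₀ ≤ ξ → (a ξ * κ ξ)^2 + (a ξ * q ξ)^2 ≤ b := by
    intro ξ hξ h
    exact aux_w_bound hv h (fun x hx => hsol x (hIccD ξ hξ x hx))
      (fun x hx => hCb x (hIccD ξ hξ x hx))
  set a₀ : ℝ := a ξ₀ with ha₀def
  have ha₀ : 0 < a₀ := hpos ξ₀ hξ₀D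
  have hmono₀ : ∀ ξ ∈ D, ξ₀ ≤ ξ → a₀ ≤ a ξ := hmono'
  have ha₀eq : a ξ₀ = a₀ := rfl
  obtain ⟨K, hK0, hbound⟩ :
      ∃ K, 0 ≤ K ∧ ∀ ξ ∈ D, ξ₀ ≤ ξ → |κ ξ| ≤ K ∧ |q ξ| ≤ K := by
    refine ⟨Real.sqrt (b / a₀^2), Real.sqrt_nonneg _, ?_⟩
    intro ξ hξ h
    have hw := hwbd ξ hξ h
    have haξ : a₀ ≤ a ξ := hmono' ξ hξ h
    have ha2 : a₀^2 ≤ (a ξ)^2 := pow_le_pow_left₀ ha₀.le haξ 2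
    have h2 : a₀^2 * (κ ξ)^2 ≤ (a ξ * κ ξ)^2 := by nlinarith [sq_nonneg (κ ξ)]
    have h3 : a₀^2 * (q ξ)^2 ≤ (a ξ * q ξ)^2 := by nlinarith [sq_nonneg (q ξ)]
    have hq2 : (a ξ * κ ξ)^2 ≥ 0 := sq_nonneg _
    have hk2 : (a ξ * q ξ)^2 ≥ 0 := sq_nonneg _
    constructor
    · rw [← Real.sqrt_sq_eq_abs]
      apply Real.sqrt_le_sqrt
      rw [le_div_iff₀ (by positivity)]
      nlinarith
    · rw [← Real.sqrt_sq_eq_abs]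
      apply Real.sqrt_le_sqrt
      rw [le_div_iff₀ (by positivity)]
      nlinarith
  clear hwbd hbpos hbdef
  clear_value a₀
  clear ha₀def hmono' b
  -- case split on ξmax
  by_cases hTop : ξmax = ⊤
  case pos =>
    subst hTop
    refine ⟨rfl, ?_⟩
    have hD' : ∀ ξ, ξ₀ ≤ ξ → ξ ∈ D := fun ξ h =>
      ⟨lt_of_lt_of_le hξ₀l (EReal.coe_le_coe_iff.2 h), EReal.coe_lt_top ξ⟩
    -- the limit of a
    have hbddA : BddAbove (a '' Ici ξ₀) := ⟨M, by rintro y ⟨ξ, hξ, rfl⟩; exact hM ξ (hD' ξ hξ)⟩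
    have hneA : (a '' Ici ξ₀).Nonempty := ⟨a ξ₀, ξ₀, self_mem_Ici, rfl⟩
    set L : ℝ := sSup (a '' Ici ξ₀) with hLdef
    have hL_ge : a₀ ≤ L := le_csSup hbddA ⟨ξ₀, self_mem_Ici, ha₀eq⟩
    have hL0 : 0 < L := lt_of_lt_of_le ha₀ hL_ge
    have hLa : ∀ ξ, ξ₀ ≤ ξ → a ξ ≤ L := fun ξ h => le_csSup hbddA ⟨ξ, h, rfl⟩
    have htendL : Tendsto a atTop (nhds L) := by
      rw [tendsto_order]
      constructor
      · intro cc hc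
        obtain ⟨y, hyim, hy⟩ := exists_lt_of_lt_csSup hneA hc
        obtain ⟨ξ₂, hξ₂, rfl⟩ := hyim
        rw [mem_Ici] at hξ₂
        rw [eventually_atTop]
        refine ⟨ξ₂ + 1, fun ξ hξ => ?_⟩
        have h9 : ξ₀ ≤ ξ := by linarith
        exact hy.trans (hmono ξ₂ (hD' _ hξ₂) ξ (hD' ξ h9) (by linarith))
      · intro cc hc
        rw [eventually_atTop]
        exact ⟨ξ₀, fun ξ hξ => lt_of_le_of_lt (hLa ξ hξ) hc⟩
    clear_value L
    clear hLdef hbddA hneA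
    have hbnd : ∀ ξ, ξ₀ ≤ ξ → 0 ≤ κ ξ ∧ κ ξ ≤ K ∧ |q ξ| ≤ K ∧ a₀ ≤ a ξ ∧ a ξ ≤ M := by
      intro ξ h
      obtain ⟨h1, h2⟩ := hbound ξ (hD' ξ h) h
      exact ⟨hκ0 ξ (hD' ξ h), (le_abs_self _).trans h1, h2, hmono₀ ξ (hD' ξ h) h,
        hM ξ (hD' ξ h)⟩
    -- the momentum P and its ODE
    set P : ℝ → ℝ := fun ξ => (a ξ)^2 * q ξ with hPdef
    have hPapp : ∀ ξ, P ξ = (a ξ)^2 * q ξ := fun _ => rfl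
    have hdP : ∀ ξ, ξ₀ ≤ ξ → HasDerivAt P ((a ξ)^2*(ω - (a ξ)^2) - v * P ξ) ξ := by
      intro ξ h
      obtain ⟨h1, h2, h3⟩ := hsol ξ (hD' ξ h)
      have h4 := (h1.pow 2).mul h3
      refine h4.congr_deriv ?_
      simp only [hPapp, Pi.pow_apply, Nat.cast_ofNat]
      ring
    clear_value P
    clear hPdef
    set c : ℝ := L^2 * (ω - L^2) with hcdef
    have htendh : Tendsto (fun ξ => (a ξ)^2*(ω - (a ξ)^2)) atTop (nhds c) := by
      have h1 : Tendsto (fun ξ => (a ξ)^2) atTop (nhds (L^2)) := htendL.pow 2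
      exact h1.mul (tendsto_const_nhds.sub h1)
    have hcvc : v * (c/v) = c := mul_div_cancel₀ c hv.ne'
    have hcq : (c/v)/L^2 = (ω - L^2)/v := by
      rw [hcdef]
      have hL2 : (L:ℝ)^2 ≠ 0 := by positivity
      field_simp
    clear_value c
    clear hcdef
    have htendP : Tendsto P atTop (nhds (c / v)) := by
      rw [Metric.tendsto_atTop]
      intro ε hε
      obtain ⟨N₁, hN₁⟩ := (Metric.tendsto_atTop.1 htendh) (v*ε/4) (by positivity)
      set N := max ξ₀ N₁ with hNdef
      obtain ⟨ξa, hξaN, hA⟩ := aux_barrier (f := fun ξ => P ξ - c/v)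
        (f' := fun ξ => (a ξ)^2*(ω - (a ξ)^2) - v * P ξ) (N := N) (b := ε/2) (δ := v*ε/4)
        (by positivity)
        (fun ξ hξ => (hdP ξ ((le_max_left _ _).trans hξ)).sub_const (c/v))
        (by
          intro ξ hξ hb'
          have hd := hN₁ ξ ((le_max_right _ _).trans hξ)
          rw [Real.dist_eq, abs_lt] at hd
          have hmul : v * (ε/2) ≤ v * (P ξ - c/v) := mul_le_mul_of_nonneg_left hb' hv.le
          rw [mul_sub, hcvc] at hmul
          linarith [hd.2])
      obtain ⟨ξb, hξbN, hB⟩ := aux_barrier (f := fun ξ => c/v - P ξ)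
        (f' := fun ξ => -((a ξ)^2*(ω - (a ξ)^2) - v * P ξ)) (N := N) (b := ε/2) (δ := v*ε/4)
        (by positivity)
        (fun ξ hξ => (hdP ξ ((le_max_left _ _).trans hξ)).const_sub (c/v))
        (by
          intro ξ hξ hb'
          have hd := hN₁ ξ ((le_max_right _ _).trans hξ)
          rw [Real.dist_eq, abs_lt] at hd
          have hmul : v * (ε/2) ≤ v * (c/v - P ξ) := mul_le_mul_of_nonneg_left hb' hv.le
          rw [mul_sub, hcvc] at hmul
          linarith [hd.1])
      refine ⟨max ξa ξb, fun ξ hξ => ?_⟩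
      have h1 := hA ξ ((le_max_left _ _).trans hξ)
      have h2 := hB ξ ((le_max_right _ _).trans hξ)
      rw [Real.dist_eq, abs_lt]
      constructor <;> linarith
    have htendq : Tendsto q atTop (nhds ((ω - L^2)/v)) := by
      have hL2 : (L:ℝ)^2 ≠ 0 := by positivity
      have h1 : Tendsto (fun ξ => P ξ / (a ξ)^2) atTop (nhds ((c/v) / L^2)) :=
        htendP.div (htendL.pow 2) hL2
      rw [← hcq]
      apply h1.congr'
      rw [EventuallyEq, eventually_atTop]
      refine ⟨ξ₀, fun ξ hξ => ?_⟩
      have ha : (0:ℝ) < a ξ := lt_of_lt_of_le ha₀ (hbnd ξ hξ).2.2.2.1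
      simp only [hPapp]
      rw [mul_comm, mul_div_assoc, div_self (by positivity : (a ξ)^2 ≠ 0), mul_one]
    -- the main claim : ω = L²
    have hωL : ω = L^2 := by
      by_contra hne
      set qi : ℝ := (ω - L^2)/v with hqidef
      have hqi : qi ≠ 0 := div_ne_zero (sub_ne_zero.2 hne) hv.ne'
      clear_value qi
      clear hqidef
      have hqi2 : 0 < qi^2 := lt_of_le_of_ne (sq_nonneg qi) (Ne.symm (pow_ne_zero 2 hqi))
      set m : ℝ := qi^2/2 with hmdef
      have hm0 : 0 < m := by simp only [hmdef]; linarith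
      have hmqi : qi^2/2 = m := rfl
      clear_value m
      have hq2 : Tendsto (fun ξ => (q ξ)^2) atTop (nhds (qi^2)) := htendq.pow 2
      obtain ⟨N₂', hN₂'⟩ := (Metric.tendsto_atTop.1 hq2) (qi^2/2) (by linarith)
      set N₃ := max N₂' ξ₀ with hN₃def
      have hN₂ : ∀ ξ ≥ N₃, m ≤ (q ξ)^2 := by
        intro ξ hξ
        have h5 := hN₂' ξ ((le_max_left _ _).trans hξ)
        rw [Real.dist_eq, abs_lt] at h5
        rw [← hmqi]
        linarith [h5.1]
      have hvK : 0 < v + K := by linarith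
      set κl : ℝ := m/(2*(v+K)) with hκldef
      have hκlpos : 0 < κl := div_pos hm0 (by linarith)
      have hκlm : (v+K)*κl = m/2 := by
        rw [hκldef]; field_simp
      clear_value κl
      clear hκldef
      obtain ⟨ξ₁, hξ₁N, hκlb⟩ := aux_barrier (f := fun ξ => -(κ ξ))
        (f' := fun ξ => -(-v * κ ξ - (κ ξ)^2 + (q ξ)^2)) (N := N₃) (b := -κl) (δ := m/2)
        (by linarith)
        (fun ξ hξ => ((hsol ξ (hD' ξ ((le_max_right _ _).trans hξ))).2.1).neg)
        (by
          intro ξ hξ hb'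
          have h1 : κ ξ ≤ κl := by linarith
          have hb2 := hbnd ξ ((le_max_right _ _).trans hξ)
          have h2 : m ≤ (q ξ)^2 := hN₂ ξ hξ
          have h3 : (κ ξ)^2 ≤ K * κ ξ := by nlinarith [hb2.1, hb2.2.1]
          have h4 : (v+K) * κ ξ ≤ (v+K)*κl := by nlinarith
          nlinarith [hb2.1, hκlm])
      -- a grows linearly beyond its bound M : contradiction
      set δ₂ : ℝ := κl * a₀ with hδ₂def
      have hδ₂0 : 0 < δ₂ := mul_pos hκlpos ha₀
      have hδ₂eq : κl * a₀ = δ₂ := rfl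
      clear_value δ₂
      clear hδ₂def
      have hξ₁ξ₀ : ξ₀ ≤ ξ₁ := (le_max_right _ _).trans hξ₁N
      have hdrift := aux_drift (f := fun ξ => -(a ξ)) (f' := fun ξ => -(κ ξ * a ξ))
        (N := ξ₁) (δ := δ₂)
        (fun ξ hξ => ((hsol ξ (hD' ξ (hξ₁ξ₀.trans hξ))).1).neg)
        (by
          intro ξ hξ
          have h1 := hκlb ξ hξ
          have h2 : κl ≤ κ ξ := by linarith
          have h3 : a₀ ≤ a ξ := (hbnd ξ (hξ₁ξ₀.trans hξ)).2.2.2.1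
          have : δ₂ ≤ κ ξ * a ξ := by
            rw [← hδ₂eq]; exact mul_le_mul h2 h3 ha₀.le (hκlpos.le.trans h2)
          show -(κ ξ * a ξ) ≤ -δ₂
          linarith)
      set ξ₂ := ξ₁ + (M - a ξ₁ + 1)/δ₂ with hξ₂def
      have haM₁ : a ξ₁ ≤ M := hM ξ₁ (hD' ξ₁ hξ₁ξ₀)
      have hξ₂ : ξ₁ ≤ ξ₂ := by
        have h1 : 0 ≤ (M - a ξ₁ + 1)/δ₂ := div_nonneg (by linarith) hδ₂0.le
        simp only [hξ₂def]; linarith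
      have h6 := hdrift ξ₂ hξ₂
      have h7 : δ₂ * (ξ₂ - ξ₁) = M - a ξ₁ + 1 := by
        simp only [hξ₂def, add_sub_cancel_left]
        exact mul_div_cancel₀ _ hδ₂0.ne'
      have h8 : a ξ₂ ≤ M := hM ξ₂ (hD' ξ₂ (hξ₁ξ₀.trans hξ₂))
      rw [h7] at h6
      linarith
    have hω : 0 < ω := by rw [hωL]; positivity
    refine ⟨hω, ?_⟩
    have hsq : Real.sqrt ω = L := by rw [hωL, Real.sqrt_sq hL0.le]
    rw [hsq]; exact htendL
  case neg =>
    exfalso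
    have hbot : ξmax ≠ ⊥ := fun h => by rw [h] at hξ₀r; exact (not_lt_bot hξ₀r)
    obtain ⟨T, hT⟩ := aux_ereal_cases ξmax hbot hTop
    subst hT
    have hξ₀T : ξ₀ < T := EReal.coe_lt_coe_iff.1 hξ₀r
    have hM0 : 0 < M := by
      have h9 := hM ξ₀ hξ₀D
      rw [ha₀eq] at h9
      linarith
    -- vector field formulation
    set F : ℝ × ℝ × ℝ → ℝ × ℝ × ℝ := fun p =>
      (p.2.1 * p.1, -v * p.2.1 - p.2.1^2 + p.2.2^2,
        ω - p.1^2 - v*p.2.2 - 2*p.2.2*p.2.1) with hFdef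
    set u : ℝ → ℝ × ℝ × ℝ := fun ξ => (a ξ, κ ξ, q ξ) with hudef
    have hFc : ContDiff ℝ 1 F := by
      rw [hFdef]
      apply ContDiff.prodMk
      · exact contDiff_snd.fst.mul contDiff_fst
      apply ContDiff.prodMk
      · exact ((contDiff_const.mul contDiff_snd.fst).sub (contDiff_snd.fst.pow 2)).add
          (contDiff_snd.snd.pow 2)
      · exact (((contDiff_const.sub (contDiff_fst.pow 2)).sub
          (contDiff_const.mul contDiff_snd.snd)).sub
          ((contDiff_const.mul contDiff_snd.snd).mul contDiff_snd.fst))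
    have hu : ∀ ξ ∈ D, HasDerivAt u (F (u ξ)) ξ := by
      intro ξ hξ
      obtain ⟨h1, h2, h3⟩ := hsol ξ hξ
      exact h1.prodMk (h2.prodMk h3)
    -- norm bound for the field along the solution
    obtain ⟨E₀, hE₀pos, hE⟩ : ∃ E₀, 0 < E₀ ∧ ∀ ξ ∈ D, ξ₀ ≤ ξ → ‖F (u ξ)‖ ≤ E₀ := by
      refine ⟨K*M + (v*K + 2*K^2) + (|ω| + M^2 + v*K + 2*K^2) + 1, ?_, ?_⟩
      · nlinarith [hK0, hM0, abs_nonneg ω, sq_nonneg K, sq_nonneg M, mul_nonneg hK0 hM0.le,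
          mul_nonneg hv.le hK0]
      · intro ξ hξ h
        obtain ⟨hbκ, hbq⟩ := hbound ξ hξ h
        have h1 : 0 < a ξ := hpos ξ hξ
        have h2 : a ξ ≤ M := hM ξ hξ
        obtain ⟨hκ1, hκ2⟩ := abs_le.1 hbκ
        obtain ⟨hq1, hq2⟩ := abs_le.1 hbq
        have h3 : ω ≤ |ω| := le_abs_self ω
        have h4 : -|ω| ≤ ω := neg_abs_le ω
        have pA : (0:ℝ) ≤ (K - κ ξ) * (K + κ ξ) := mul_nonneg (by linarith) (by linarith)
        have pB : (0:ℝ) ≤ (K - q ξ) * (K + q ξ) := mul_nonneg (by linarith) (by linarith)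
        have pC : (0:ℝ) ≤ (K - q ξ) * (K - κ ξ) := mul_nonneg (by linarith) (by linarith)
        have pD : (0:ℝ) ≤ (K + q ξ) * (K + κ ξ) := mul_nonneg (by linarith) (by linarith)
        have pE2 : (0:ℝ) ≤ (K - q ξ) * (K + κ ξ) := mul_nonneg (by linarith) (by linarith)
        have pF2 : (0:ℝ) ≤ (K + q ξ) * (K - κ ξ) := mul_nonneg (by linarith) (by linarith)
        have pG : (0:ℝ) ≤ v * (K - κ ξ) := mul_nonneg hv.le (by linarith)
        have pH : (0:ℝ) ≤ v * (K + κ ξ) := mul_nonneg hv.le (by linarith)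
        have pI : (0:ℝ) ≤ v * (K - q ξ) := mul_nonneg hv.le (by linarith)
        have pJ : (0:ℝ) ≤ v * (K + q ξ) := mul_nonneg hv.le (by linarith)
        have pK2 : (0:ℝ) ≤ (M - a ξ) * (M + a ξ) := mul_nonneg (by linarith) (by linarith)
        have pL : (0:ℝ) ≤ K * (M - a ξ) := mul_nonneg hK0 (by linarith)
        have pM : (0:ℝ) ≤ K * (M + a ξ) := mul_nonneg hK0 (by linarith)
        rw [hFdef, hudef]
        simp only [Prod.norm_def, Real.norm_eq_abs]
        apply max_le
        · apply abs_le.2; constructor <;> nlinarith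
        apply max_le
        · apply abs_le.2; constructor <;> nlinarith
        · apply abs_le.2; constructor <;> nlinarith
    -- u is Lipschitz near T
    have hulip : ∀ x ∈ Ico ξ₀ T, ∀ y ∈ Ico ξ₀ T, ‖u y - u x‖ ≤ E₀ * |y - x| := by
      have hmain : ∀ x y, ξ₀ ≤ x → x ≤ y → y < T → ‖u y - u x‖ ≤ E₀ * (y - x) := by
        intro x y hx hxy hyT
        have hIccsub : ∀ z ∈ Icc x y, z ∈ D := fun z hz =>
          ⟨lt_of_lt_of_le hξ₀l (EReal.coe_le_coe_iff.2 (hx.trans hz.1)),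
           EReal.coe_lt_coe_iff.2 (lt_of_le_of_lt hz.2 hyT)⟩
        exact norm_image_sub_le_of_norm_deriv_le_segment'
          (fun z hz => (hu z (hIccsub z hz)).hasDerivWithinAt)
          (fun z hz => hE z (hIccsub z (Ico_subset_Icc_self hz)) (hx.trans hz.1))
          y (right_mem_Icc.2 hxy)
      intro x hx y hy
      rcases le_total x y with h | h
      · rw [abs_of_nonneg (by linarith)]
        exact hmain x y hx.1 h hy.2
      · rw [abs_of_nonpos (by linarith), norm_sub_rev]
        have h5 := hmain y x hy.1 h hx.2
        linarith
    -- u has a limit at T from the left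
    obtain ⟨xs, hxs⟩ : ∃ xs : ℝ × ℝ × ℝ, Tendsto u (nhdsWithin (T:ℝ) (Iio T)) (nhds xs) := by
      have hc : Cauchy (Filter.map u (nhdsWithin (T:ℝ) (Iio T))) := by
        rw [Metric.cauchy_iff]
        constructor
        · exact Filter.map_neBot
        · intro ε hε
          have hδpos : 0 < min (ε/(2*(E₀+1))) (T - ξ₀) := lt_min (by positivity) (by linarith)
          set δ := min (ε/(2*(E₀+1))) (T - ξ₀) with hδdef
          refine ⟨u '' (Ioo (T - δ) T),
            Filter.image_mem_map (Ioo_mem_nhdsLT (by linarith)), ?_⟩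
          rintro _ ⟨x, hx, rfl⟩ _ ⟨y, hy, rfl⟩
          have hd0 : ξ₀ ≤ T - δ := by
            have h9 := min_le_right (ε/(2*(E₀+1))) (T - ξ₀)
            rw [← hδdef] at h9
            linarith
          have hxI : x ∈ Ico ξ₀ T := ⟨by linarith [hx.1], hx.2⟩
          have hyI : y ∈ Ico ξ₀ T := ⟨by linarith [hy.1], hy.2⟩
          have h5 := hulip x hxI y hyI
          have h6 : |y - x| < δ := by
            rw [abs_lt]
            constructor <;> [linarith [hy.1, hx.2]; linarith [hx.1, hy.2]]
          have h7 : δ ≤ ε/(2*(E₀+1)) := min_le_left _ _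
          rw [dist_eq_norm, norm_sub_rev]
          have h8 : E₀ * |y - x| < E₀ * δ := by
            apply mul_lt_mul_of_pos_left h6 hE₀pos
          have h10 : E₀ * δ < ε := by
            have h11 : E₀ * δ ≤ E₀ * (ε/(2*(E₀+1))) :=
              mul_le_mul_of_nonneg_left h7 hE₀pos.le
            have h12 : E₀ * (ε/(2*(E₀+1))) < ε := by
              rw [div_eq_mul_inv]
              have h13 : 0 < E₀ + 1 := by linarith
              rw [show E₀ * (ε * (2*(E₀+1))⁻¹) = (E₀/(2*(E₀+1))) * ε by ring]
              have h14 : E₀/(2*(E₀+1)) < 1 := by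
                rw [div_lt_one (by linarith)]
                linarith
              nlinarith
            linarith
          linarith
      obtain ⟨xs, hxs⟩ := CompleteSpace.complete hc
      exact ⟨xs, hxs⟩
    -- local solution g through (T, xs)
    obtain ⟨g, hgT, ε, hεpos, hg⟩ :=
      (hFc.contDiffAt (x := xs)).exists_forall_mem_closedBall_exists_eq_forall_mem_Ioo_hasDerivAt₀ T
    -- Lipschitz neighbourhood of xs
    obtain ⟨Kl, t, htmem, hlipt⟩ := (hFc.contDiffAt (x := xs)).exists_lipschitzOnWith
    obtain ⟨r₀, hr₀pos, hball⟩ := Metric.nhds_basis_closedBall.mem_iff.1 htmem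
    have hlip : LipschitzOnWith Kl F (Metric.closedBall xs r₀) := hlipt.mono hball
    -- u eventually in the closed ball
    have hu_ball : ∀ᶠ ξ in nhdsWithin (T:ℝ) (Iio T), u ξ ∈ Metric.closedBall xs r₀ :=
      hxs (Metric.closedBall_mem_nhds xs hr₀pos)
    obtain ⟨l₁, hl₁, hl₁sub⟩ := mem_nhdsLT_iff_exists_Ioo_subset.1 hu_ball
    rw [mem_Iio] at hl₁
    -- g eventually in the closed ball
    have hg_ball : ∀ᶠ ξ in nhds (T:ℝ), g ξ ∈ Metric.closedBall xs r₀ := by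
      have h9 : ContinuousAt g T := (hg T ⟨by linarith, by linarith⟩).continuousAt
      have h10 : Metric.closedBall xs r₀ ∈ nhds (g T) := by
        rw [hgT]; exact Metric.closedBall_mem_nhds xs hr₀pos
      exact h9 h10
    obtain ⟨δg, hδgpos, hδgsub⟩ := Metric.eventually_nhds_iff_ball.1 hg_ball
    -- choice of ξ₁
    have hlbT : max (max ξ₀ (T - ε)) (max l₁ (T - δg)) < T :=
      max_lt (max_lt hξ₀T (by linarith)) (max_lt hl₁ (by linarith))
    set lb := max (max ξ₀ (T - ε)) (max l₁ (T - δg)) with hlbdef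
    set ξ₁ := (lb + T)/2 with hξ₁def
    have hξ₁lb : lb < ξ₁ := by simp only [hξ₁def]; linarith
    have hξ₁T : ξ₁ < T := by simp only [hξ₁def]; linarith
    have hξ₁ξ₀ : ξ₀ < ξ₁ :=
      lt_of_le_of_lt ((le_max_left _ _).trans (le_max_left _ _)) hξ₁lb
    have hξ₁ε : T - ε < ξ₁ :=
      lt_of_le_of_lt ((le_max_right _ _).trans (le_max_left _ _)) hξ₁lb
    have hξ₁l₁ : l₁ < ξ₁ :=
      lt_of_le_of_lt ((le_max_left _ _).trans (le_max_right _ _)) hξ₁lb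
    have hξ₁δg : T - δg < ξ₁ :=
      lt_of_le_of_lt ((le_max_right _ _).trans (le_max_right _ _)) hξ₁lb
    clear_value ξ₁
    clear hξ₁def hlbdef
    -- the closed extension of u at T
    set ub : ℝ → ℝ × ℝ × ℝ := fun ξ => if ξ < T then u ξ else xs with hubdef
    have hubu : ∀ ξ, ξ < T → ub ξ = u ξ := fun ξ h => if_pos h
    have hubT : ub T = xs := if_neg (lt_irrefl T)
    have hmemD' : ∀ x : ℝ, ξ₀ < x → x < T → x ∈ D := fun x hx1 hx2 =>
      ⟨lt_trans hξ₀l (EReal.coe_lt_coe_iff.2 hx1), EReal.coe_lt_coe_iff.2 hx2⟩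
    have hub_deriv : ∀ ξ ∈ D, HasDerivAt ub (F (u ξ)) ξ := by
      intro ξ hξ
      apply (hu ξ hξ).congr_of_eventuallyEq
      filter_upwards [isOpen_Iio.mem_nhds (EReal.coe_lt_coe_iff.1 hξ.2)] with x hx
      exact hubu x hx
    have hub_lim : Tendsto ub (nhdsWithin (T:ℝ) (Iio T)) (nhds xs) := by
      apply Filter.Tendsto.congr' _ hxs
      filter_upwards [self_mem_nhdsWithin] with x hx
      exact (hubu x hx).symm
    have hubT_deriv : HasDerivWithinAt ub (F xs) (Iic T) T := by
      apply hasDerivWithinAt_Iic_of_tendsto_deriv (s := Ioo ξ₁ T)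
      · intro x hx
        exact (hub_deriv x (hmemD' x (hξ₁ξ₀.trans hx.1) hx.2)).differentiableAt.differentiableWithinAt
      · unfold ContinuousWithinAt
        rw [hubT]
        exact hub_lim.mono_left (nhdsWithin_mono _ Ioo_subset_Iio_self)
      · exact Ioo_mem_nhdsLT hξ₁T
      · have h2 : Tendsto (fun ξ => F (u ξ)) (nhdsWithin (T:ℝ) (Iio T)) (nhds (F xs)) :=
          (hFc.continuous.tendsto xs).comp hxs
        apply h2.congr'
        filter_upwards [Ioo_mem_nhdsLT hξ₁T] with x hx
        exact ((hub_deriv x (hmemD' x (hξ₁ξ₀.trans hx.1) hx.2)).deriv).symm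
    -- uniqueness : ub = g on [ξ₁, T]
    have huniq : Set.EqOn ub g (Icc ξ₁ T) := by
      apply ODE_solution_unique_of_mem_Icc_left (v := fun _ y => F y)
        (s := fun _ => Metric.closedBall xs r₀) (K := Kl) (fun _ _ => hlip)
      · intro x hx
        rcases lt_or_eq_of_le hx.2 with h | h
        · exact (hub_deriv x (hmemD' x (lt_of_lt_of_le hξ₁ξ₀ hx.1) h)).continuousAt.continuousWithinAt
        · subst h
          exact hubT_deriv.continuousWithinAt.mono Icc_subset_Iic_self
      · intro x hx
        rcases lt_or_eq_of_le hx.2 with h | h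
        · have hd9 := hub_deriv x (hmemD' x (hξ₁ξ₀.trans hx.1) h)
          have h9 : F (ub x) = F (u x) := by rw [hubu x h]
          rw [h9]
          exact hd9.hasDerivWithinAt
        · subst h
          rw [hubT]
          exact hubT_deriv
      · intro x hx
        rcases lt_or_eq_of_le hx.2 with h | h
        · rw [hubu x h]
          exact hl₁sub ⟨hξ₁l₁.trans hx.1, h⟩
        · subst h
          rw [hubT]
          exact Metric.mem_closedBall_self hr₀pos.le
      · intro x hx
        exact (hg x ⟨by linarith [hx.1], by linarith [hx.2]⟩).continuousAt.continuousWithinAt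
      · intro x hx
        exact (hg x ⟨by linarith [hx.1], by linarith [hx.2]⟩).hasDerivWithinAt
      · intro x hx
        obtain ⟨hx1, hx2⟩ := hx
        apply hδgsub
        rw [Metric.mem_ball, Real.dist_eq, abs_lt]
        constructor
        · linarith
        · linarith
      · rw [hubT, hgT]
    -- the extension
    set ue : ℝ → ℝ × ℝ × ℝ := fun ξ => if ξ < T then u ξ else g ξ with huedef
    have hue_u : ∀ ξ, ξ < T → ue ξ = u ξ := fun ξ h => if_pos h
    have hue_g : ∀ ξ ∈ Ioo ξ₁ (T + ε), ue ξ = g ξ := by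
      intro ξ hξ
      by_cases h : ξ < T
      · rw [hue_u ξ h, ← hubu ξ h]
        exact huniq ⟨hξ.1.le, h.le⟩
      · exact if_neg h
    have hue_deriv : ∀ ξ : ℝ, ξmin < (ξ:EReal) → ξ < T + ε/2 → HasDerivAt ue (F (ue ξ)) ξ := by
      intro ξ h1 h2
      rcases lt_or_ge ξ T with h | h
      · have hξD : ξ ∈ D := ⟨h1, EReal.coe_lt_coe_iff.2 h⟩
        have h9 : HasDerivAt ue (F (u ξ)) ξ := by
          apply (hu ξ hξD).congr_of_eventuallyEq
          filter_upwards [isOpen_Iio.mem_nhds h] with x hx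
          exact hue_u x hx
        rw [hue_u ξ h]
        exact h9
      · have hξgt : ξ₁ < ξ := lt_of_lt_of_le hξ₁T h
        have hmem : ξ ∈ Ioo (T - ε) (T + ε) := ⟨by linarith, by linarith⟩
        have heq : ue ξ = g ξ := hue_g ξ ⟨hξgt, by linarith⟩
        rw [heq]
        apply (hg ξ hmem).congr_of_eventuallyEq
        filter_upwards [isOpen_Ioo.mem_nhds (⟨hξgt, by linarith⟩ : ξ ∈ Ioo ξ₁ (T + ε))] with x hx
        exact hue_g x hx
    -- scalar components of the extension
    have hsolext : IsSolS v ω (fun ξ => (ue ξ).1) (fun ξ => (ue ξ).2.1) (fun ξ => (ue ξ).2.2)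
        (domS ξmin ((T + ε/2 : ℝ) : EReal)) := by
      intro ξ hξ
      have h2 : ξ < T + ε/2 := EReal.coe_lt_coe_iff.1 hξ.2
      have hd := hue_deriv ξ hξ.1 h2
      have h1 : HasDerivAt (fun x => (ue x).1) ((F (ue ξ)).1) ξ :=
        (ContinuousLinearMap.fst ℝ ℝ (ℝ × ℝ)).hasFDerivAt.comp_hasDerivAt ξ hd
      have hsnd : HasDerivAt (fun x => (ue x).2) ((F (ue ξ)).2) ξ :=
        (ContinuousLinearMap.snd ℝ ℝ (ℝ × ℝ)).hasFDerivAt.comp_hasDerivAt ξ hd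
      have h2' : HasDerivAt (fun x => (ue x).2.1) ((F (ue ξ)).2.1) ξ :=
        (ContinuousLinearMap.fst ℝ ℝ ℝ).hasFDerivAt.comp_hasDerivAt ξ hsnd
      have h3' : HasDerivAt (fun x => (ue x).2.2) ((F (ue ξ)).2.2) ξ :=
        (ContinuousLinearMap.snd ℝ ℝ ℝ).hasFDerivAt.comp_hasDerivAt ξ hsnd
      exact ⟨h1, h2', h3'⟩
    -- agreement on D
    have hagree : ∀ ξ ∈ D, (ue ξ).1 = a ξ ∧ (ue ξ).2.1 = κ ξ ∧ (ue ξ).2.2 = q ξ := by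
      intro ξ hξ
      rw [hue_u ξ (EReal.coe_lt_coe_iff.1 hξ.2), hudef]
      exact ⟨rfl, rfl, rfl⟩
    -- contradiction with maximality
    have hfin := hmaxl ξmin ((T + ε/2 : ℝ) : EReal) _ _ _ le_rfl
      (EReal.coe_le_coe_iff.2 (by linarith)) hsolext hagree
    have h9 : (T + ε/2 : ℝ) = T := EReal.coe_injective hfin.2
    linarith

end AuxProof

/-- A nonconstant maximal positive-amplitude solution of (S) with `v > 0`, strictly increasing
amplitude and amplitude not tending to `+∞` at `ξ_max`, satisfies: `ξ_max = +∞`, `ω > 0`, and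
`a(ξ) → √ω` as `ξ → +∞`. -/
theorem amplitude_converges_at_plus_infinity
    (v ω : ℝ) (hv : 0 < v) (a κ q : ℝ → ℝ) (ξmin ξmax : EReal)
    (hmax : IsMaximalSolS v ω a κ q ξmin ξmax)
    (hpos : ∀ ξ ∈ domS ξmin ξmax, 0 < a ξ)
    (hnonconst : ¬ ∀ ξ ∈ domS ξmin ξmax, ∀ ξ' ∈ domS ξmin ξmax,
      a ξ = a ξ' ∧ κ ξ = κ ξ' ∧ q ξ = q ξ')
    (hmono : ∀ ξ ∈ domS ξmin ξmax, ∀ ξ' ∈ domS ξmin ξmax, ξ < ξ' → a ξ < a ξ')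
    (hnotinf : ¬ Tendsto a (leftLimF ξmax) atTop) :
    ξmax = ⊤ ∧ 0 < ω ∧ Tendsto a atTop (nhds (Real.sqrt ω)) := by
  obtain ⟨hlt, hsol, hmaxl⟩ := hmax
  exact aux_main v ω a κ q ξmin ξmax hv hlt hsol hpos hmono hnotinf hmaxl
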